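/- Suppose $\mathscr{A} \subseteq \mathbb{N}$ satisfies $\int_0^1 |g(\alpha)|^p d\alpha \ll N^{p-1}$ for some $p \in [1,2)$, where $g(\alpha) = \sum_{n \in \mathscr{A} \cap [1,N]} e(n\alpha)$. Let $f : \mathbb{N} \to \mathbb{C}$ be any arithmetic function, and set $H_f(\alpha) = N^{-1} \sum_{1 \le n \le N} f(n) e(n\alpha)$, $\|H_f\|_\infty = \sup_{\alpha \in [0,1)} |H_f(\alpha)|$, and $\|f\|_{l^2(N)} = (N^{-1} \sum_{1 \le n \le N} |f(n)|^2)^{1/2}$. Then $N^{-1} \sum_{n \in \mathscr{A} \cap [1,N]} f(n) \ll \|H_f\|_\infty^{2/p - 1}\, \|f\|_{l^2(N)}^{2 - 2/p}$. -/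

import Mathlib

open Complex Finset MeasureTheory
open scoped Real Classical

/-- `e x = exp(2πix)` -/
noncomputable def e (x : ℝ) : ℂ := Complex.exp (2 * Real.pi * Complex.I * x)

/-- The elements of `A` in `[1, N]`, as a finset. -/
noncomputable def AN (A : Set ℕ) (N : ℝ) : Finset ℕ :=
  (Finset.Icc 1 ⌊N⌋₊).filter (· ∈ A)

/-- The mean value `I_p(N; A)`. -/
noncomputable def Ip (p : ℝ) (A : Set ℕ) (N : ℝ) : ℝ :=
  ∫ α in (0:ℝ)..(1:ℝ), ‖∑ n ∈ AN A N, e (n * α)‖ ^ p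

lemma cont_e (c : ℝ) : Continuous fun x : ℝ => e (c * x) := by
  unfold e; fun_prop

lemma norm_e (x : ℝ) : ‖e x‖ = 1 := by
  unfold e
  rw [Complex.norm_exp]
  norm_num [Complex.mul_re, Complex.mul_im]

lemma e_one_eq (n : ℕ) : e ((n : ℝ) * 1) = e ((n : ℝ) * 0) := by
  unfold e
  push_cast
  rw [mul_zero, mul_zero, mul_one]
  rw [show (2 * (Real.pi:ℂ) * Complex.I * n) = (n : ℤ) * (2 * Real.pi * Complex.I) by push_cast; ring]
  rw [Complex.exp_int_mul_two_pi_mul_I, Complex.exp_zero]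

lemma integral_e (k : ℤ) :
    (∫ x in (0:ℝ)..1, Complex.exp (2 * Real.pi * Complex.I * k * x)) =
      if k = 0 then 1 else 0 := by
  by_cases hk : k = 0
  · simp [hk]
  · rw [if_neg hk, integral_exp_mul_complex (by
      simp [Real.pi_ne_zero, Complex.I_ne_zero, hk, Complex.ext_iff])]
    rw [show (2 * (Real.pi:ℂ) * Complex.I * k * (1:ℝ)) = (k : ℤ) * (2 * Real.pi * Complex.I) by
      push_cast; ring]
    simp [Complex.exp_int_mul_two_pi_mul_I]

lemma e_orth (n m : ℕ) :
    (∫ x in (0:ℝ)..1, e ((n:ℝ) * x) * (starRingEnd ℂ) (e ((m:ℝ) * x))) =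
      if n = m then 1 else 0 := by
  set k : ℤ := (n : ℤ) - m with hk
  have hkc : ((k : ℤ) : ℂ) = (n : ℂ) - (m : ℂ) := by push_cast [hk]; ring
  have h : ∀ x : ℝ, e ((n:ℝ) * x) * (starRingEnd ℂ) (e ((m:ℝ) * x)) =
      Complex.exp (2 * Real.pi * Complex.I * (k : ℂ) * x) := by
    intro x
    unfold e
    rw [← Complex.exp_conj, ← Complex.exp_add]
    congr 1
    rw [hkc]
    simp only [map_mul, Complex.conj_I, Complex.conj_ofReal, map_ofNat]
    push_cast
    ring
  simp_rw [h]
  rw [integral_e k]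
  congr 1
  simp [hk, sub_eq_zero]

lemma intInt_term (F : ℕ → ℂ) (n : ℕ) :
    IntervalIntegrable (fun x => F n * e ((n:ℝ) * x)) volume 0 1 :=
  (continuous_const.mul (cont_e n)).intervalIntegrable 0 1

lemma dot (s t : Finset ℕ) (hts : t ⊆ s) (F G : ℕ → ℂ) :
    (∫ x in (0:ℝ)..1,
        (∑ n ∈ s, F n * e ((n:ℝ) * x)) * (starRingEnd ℂ) (∑ m ∈ t, G m * e ((m:ℝ) * x)))
      = ∑ n ∈ t, F n * (starRingEnd ℂ) (G n) := by
  have h : ∀ x : ℝ,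
      (∑ n ∈ s, F n * e ((n:ℝ) * x)) * (starRingEnd ℂ) (∑ m ∈ t, G m * e ((m:ℝ) * x))
        = ∑ n ∈ s, ∑ m ∈ t,
            (F n * (starRingEnd ℂ) (G m)) * (e ((n:ℝ) * x) * (starRingEnd ℂ) (e ((m:ℝ) * x))) := by
    intro x
    rw [map_sum, Finset.sum_mul_sum]
    refine Finset.sum_congr rfl fun n _ => Finset.sum_congr rfl fun m _ => ?_
    rw [map_mul]; ring
  simp_rw [h]
  rw [intervalIntegral.integral_finset_sum]
  · have : ∀ n ∈ s, (∫ x in (0:ℝ)..1, ∑ m ∈ t,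
        (F n * (starRingEnd ℂ) (G m)) * (e ((n:ℝ) * x) * (starRingEnd ℂ) (e ((m:ℝ) * x))))
        = ∑ m ∈ t, (F n * (starRingEnd ℂ) (G m)) * (if n = m then 1 else 0) := by
      intro n _
      rw [intervalIntegral.integral_finset_sum]
      · exact Finset.sum_congr rfl fun m _ => by
          rw [intervalIntegral.integral_const_mul, e_orth]
      · intro m _
        exact (continuous_const.mul ((cont_e n).mul
          (Complex.continuous_conj.comp (cont_e m)))).intervalIntegrable 0 1
    rw [Finset.sum_congr rfl this]
    have h2 : ∀ n ∈ s, (∑ m ∈ t, (F n * (starRingEnd ℂ) (G m)) * (if n = m then 1 else 0))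
        = if n ∈ t then F n * (starRingEnd ℂ) (G n) else 0 := by
      intro n _
      rw [Finset.sum_congr rfl (fun m _ => by rw [mul_ite, mul_one, mul_zero])]
      simp [Finset.sum_ite_eq]
    rw [Finset.sum_congr rfl h2, Finset.sum_ite_mem, Finset.inter_eq_right.2 hts]
  · intro n _
    apply Continuous.intervalIntegrable
    exact continuous_finset_sum _ fun m _ => continuous_const.mul
      ((cont_e n).mul (Complex.continuous_conj.comp (cont_e m)))

/-- Averages of arithmetic functions over strongly subconvex `L^p`-sets:
`N⁻¹ ∑_{n ∈ A(N)} f(n) ≪ ‖H_f‖_∞^{2/p-1} ‖f‖_{l²(N)}^{2-2/p}`. -/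
theorem stmt_11 (p : ℝ) (hp1 : 1 ≤ p) (hp2 : p < 2) (C₀ : ℝ) :
    ∃ C : ℝ, ∀ (A : Set ℕ) (N : ℝ), 1 ≤ N →
      Ip p A N ≤ C₀ * N ^ (p - 1) →
      ∀ f : ℕ → ℂ,
        ‖((N : ℂ))⁻¹ * ∑ n ∈ AN A N, f n‖ ≤
          C * (⨆ α : Set.Ico (0:ℝ) 1,
                ‖((N : ℂ))⁻¹ * ∑ n ∈ Finset.Icc 1 ⌊N⌋₊, f n * e (n * (α : ℝ))‖) ^ (2 / p - 1) *
            ((N⁻¹ * ∑ n ∈ Finset.Icc 1 ⌊N⌋₊, ‖f n‖ ^ (2:ℕ)) ^ ((1:ℝ)/2)) ^ (2 - 2 / p) := by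
  refine ⟨(max C₀ 0) ^ ((1:ℝ)/p), ?_⟩
  intro A N hN hI f
  have hp0 : (0:ℝ) < p := lt_of_lt_of_le one_pos hp1
  have hN0 : (0:ℝ) < N := lt_of_lt_of_le one_pos hN
  set C : ℝ := (max C₀ 0) ^ ((1:ℝ)/p) with hC
  set a : ℝ := 2 / p - 1 with ha
  set b : ℝ := 2 - 2 / p with hb
  have ha0 : 0 ≤ a := by
    rw [ha, sub_nonneg]
    rw [le_div_iff₀ hp0]; linarith
  have hb0 : 0 ≤ b := by
    rw [hb, sub_nonneg, div_le_iff₀ hp0]; linarith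
  have hab : a + b = 1 := by rw [ha, hb]; ring
  set K := ⌊N⌋₊ with hK
  set Hc : ℝ → ℂ := fun x => (N:ℂ)⁻¹ * ∑ n ∈ Finset.Icc 1 K, f n * e ((n:ℝ) * x) with hHc
  set g : ℝ → ℂ := fun x => ∑ n ∈ AN A N, e ((n:ℝ) * x) with hg
  set S : ℝ := N⁻¹ * ∑ n ∈ Finset.Icc 1 K, ‖f n‖ ^ (2:ℕ) with hS
  set M : ℝ := ⨆ α : Set.Ico (0:ℝ) 1,
      ‖((N : ℂ))⁻¹ * ∑ n ∈ Finset.Icc 1 K, f n * e (n * (α : ℝ))‖ with hM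
  have contHc : Continuous Hc := by
    rw [hHc]
    exact continuous_const.mul (continuous_finset_sum _ fun n _ => continuous_const.mul (cont_e n))
  have contg : Continuous g := by
    rw [hg]; exact continuous_finset_sum _ fun n _ => cont_e n
  have hMeq : ∀ x : ℝ, ‖Hc x‖ =
      ‖((N : ℂ))⁻¹ * ∑ n ∈ Finset.Icc 1 K, f n * e (n * x)‖ := fun x => rfl
  have hB : ∀ x : ℝ, ‖Hc x‖ ≤ ‖(N:ℂ)⁻¹‖ * ∑ n ∈ Finset.Icc 1 K, ‖f n‖ := by
    intro x
    rw [hHc]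
    simp only
    rw [norm_mul]
    refine mul_le_mul_of_nonneg_left ?_ (norm_nonneg _)
    refine le_trans (norm_sum_le _ _) ?_
    refine Finset.sum_le_sum fun n _ => ?_
    rw [norm_mul, norm_e, mul_one]
  have hbdd : BddAbove (Set.range fun α : Set.Ico (0:ℝ) 1 =>
      ‖((N : ℂ))⁻¹ * ∑ n ∈ Finset.Icc 1 K, f n * e (n * (α : ℝ))‖) := by
    refine ⟨‖(N:ℂ)⁻¹‖ * ∑ n ∈ Finset.Icc 1 K, ‖f n‖, ?_⟩
    rintro y ⟨α, rfl⟩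
    exact le_trans (le_of_eq (hMeq α).symm) (hB α)
  have hMx : ∀ x ∈ Set.Icc (0:ℝ) 1, ‖Hc x‖ ≤ M := by
    intro x hx
    rcases lt_or_eq_of_le hx.2 with h1 | h1
    · rw [hMeq x]
      exact le_ciSup hbdd (⟨x, hx.1, h1⟩ : Set.Ico (0:ℝ) 1)
    · have : Hc x = Hc 0 := by
        rw [hHc, h1]
        simp only
        congr 1
        exact Finset.sum_congr rfl fun n _ => by rw [e_one_eq n]
      rw [this, hMeq 0]
      exact le_ciSup hbdd (⟨0, le_refl _, one_pos⟩ : Set.Ico (0:ℝ) 1)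
  have hM0 : 0 ≤ M := le_trans (norm_nonneg _) (hMx 0 ⟨le_refl _, zero_le_one⟩)
  have hsub : AN A N ⊆ Finset.Icc 1 K := Finset.filter_subset _ _
  -- orthogonality
  have orth1 : (∫ x in (0:ℝ)..1, Hc x * (starRingEnd ℂ) (g x))
      = (N:ℂ)⁻¹ * ∑ n ∈ AN A N, f n := by
    have h1 : ∀ x : ℝ, Hc x * (starRingEnd ℂ) (g x) =
        (∑ n ∈ Finset.Icc 1 K, ((N:ℂ)⁻¹ * f n) * e ((n:ℝ) * x)) *
          (starRingEnd ℂ) (∑ m ∈ AN A N, (1:ℂ) * e ((m:ℝ) * x)) := by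
      intro x
      rw [hHc, hg]
      simp only [one_mul, Finset.mul_sum, mul_assoc]
    simp_rw [h1]
    rw [dot _ _ hsub]
    simp [Finset.mul_sum, mul_assoc]
  -- Parseval
  have parseval : (∫ x in (0:ℝ)..1, ‖Hc x‖ ^ (2:ℕ)) = N⁻¹ * S := by
    have hNc : ‖(N:ℂ)⁻¹‖ = N⁻¹ := by
      rw [norm_inv, Complex.norm_real, Real.norm_of_nonneg hN0.le]
    have h1 : ∀ x : ℝ, Hc x = ∑ n ∈ Finset.Icc 1 K, ((N:ℂ)⁻¹ * f n) * e ((n:ℝ) * x) := by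
      intro x; rw [hHc]; simp only [Finset.mul_sum, mul_assoc]
    have h2 := dot (Finset.Icc 1 K) (Finset.Icc 1 K) (Finset.Subset.refl _)
        (fun n => (N:ℂ)⁻¹ * f n) (fun n => (N:ℂ)⁻¹ * f n)
    simp only at h2
    simp_rw [← h1] at h2
    have h3 : ∀ z : ℂ, z * (starRingEnd ℂ) z = ((‖z‖ ^ (2:ℕ) : ℝ) : ℂ) := by
      intro z; rw [RCLike.mul_conj]; norm_cast
    simp_rw [h3] at h2
    rw [intervalIntegral.integral_ofReal, ← Complex.ofReal_sum] at h2
    have h4 := Complex.ofReal_inj.mp h2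
    rw [h4, hS]
    simp_rw [norm_mul, hNc, mul_pow, ← Finset.mul_sum]
    ring
  -- the main pointwise bound + mono step will use these integrabilities
  have contHb : Continuous fun x => ‖Hc x‖ ^ b :=
    contHc.norm.rpow_const fun x => Or.inr hb0
  -- key Hölder estimate
  have S0 : 0 ≤ S := by rw [hS]; positivity
  have hIpg : Ip p A N = ∫ x in (0:ℝ)..1, ‖g x‖ ^ p := rfl
  have hIp0 : 0 ≤ Ip p A N := by
    rw [hIpg]
    exact intervalIntegral.integral_nonneg zero_le_one
      fun x _ => Real.rpow_nonneg (norm_nonneg _) _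
  have hIple : Ip p A N ≤ max C₀ 0 * N ^ (p - 1) :=
    le_trans hI (mul_le_mul_of_nonneg_right (le_max_left _ _)
      (Real.rpow_pos_of_pos hN0 _).le)
  have key : (∫ x in (0:ℝ)..1, ‖Hc x‖ ^ b * ‖g x‖) ≤ C * (S ^ ((1:ℝ)/2)) ^ b := by
    rcases eq_or_lt_of_le hp1 with hpe | hp
    · -- p = 1
      have hb' : b = 0 := by rw [hb, ← hpe]; norm_num
      have h5 : (∫ x in (0:ℝ)..1, ‖Hc x‖ ^ b * ‖g x‖) = Ip p A N := by
        rw [hIpg]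
        refine intervalIntegral.integral_congr fun x _ => ?_
        rw [hb', Real.rpow_zero, one_mul, ← hpe, Real.rpow_one]
      rw [h5, hb', Real.rpow_zero, mul_one, hC, ← hpe,
        show (1:ℝ)/1 = 1 by norm_num, Real.rpow_one]
      have h6 := hIple
      rw [← hpe] at h6
      simpa [sub_self, Real.rpow_zero] using h6
    · -- 1 < p
      set q : ℝ := p / (p - 1) with hq
      have hps : p - 1 ≠ 0 := ne_of_gt (by linarith)
      have hpq : p.HolderConjugate q := .conjExponent hp
      have hq0 : 0 < q := hpq.symm.pos
      have hbq2 : b * q = 2 := by rw [hb, hq]; field_simp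
      have h1q : (p - 1) * ((1:ℝ)/p) = 1/q := by rw [hq]; field_simp
      have h2q : ((1:ℝ)/2) * b = 1/q := by rw [hb, hq]; field_simp
      haveI : IsFiniteMeasure (volume.restrict (Set.Ioc (0:ℝ) 1)) := by
        constructor
        rw [Measure.restrict_apply_univ]
        simp [Real.volume_Ioc]
      have memg : MemLp (fun x => ‖g x‖) (ENNReal.ofReal p)
          (volume.restrict (Set.Ioc (0:ℝ) 1)) :=
        MemLp.of_bound contg.norm.aestronglyMeasurable ((AN A N).card : ℝ)
          (ae_of_all _ fun x => by
            rw [Real.norm_of_nonneg (norm_nonneg _), hg]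
            refine le_trans (norm_sum_le _ _) (le_of_eq ?_)
            rw [Finset.sum_congr rfl fun n _ => norm_e _]
            simp)
      have memH : MemLp (fun x => ‖Hc x‖ ^ b) (ENNReal.ofReal q)
          (volume.restrict (Set.Ioc (0:ℝ) 1)) :=
        MemLp.of_bound contHb.aestronglyMeasurable
          ((‖(N:ℂ)⁻¹‖ * ∑ n ∈ Finset.Icc 1 K, ‖f n‖) ^ b)
          (ae_of_all _ fun x => by
            rw [Real.norm_of_nonneg (Real.rpow_nonneg (norm_nonneg _) _)]
            exact Real.rpow_le_rpow (norm_nonneg _) (hB x) hb0)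
      have hold := integral_mul_le_Lp_mul_Lq_of_nonneg hpq.symm
        (ae_of_all _ fun x => Real.rpow_nonneg (norm_nonneg _) _)
        (ae_of_all _ fun x => norm_nonneg _) memH memg
      have hbqx : ∀ x : ℝ, (‖Hc x‖ ^ b) ^ q = ‖Hc x‖ ^ (2:ℕ) := by
        intro x
        rw [← Real.rpow_mul (norm_nonneg _), hbq2,
          show (2:ℝ) = ((2:ℕ):ℝ) by norm_num, Real.rpow_natCast]
      calc (∫ x in (0:ℝ)..1, ‖Hc x‖ ^ b * ‖g x‖)
          = ∫ x in Set.Ioc (0:ℝ) 1, ‖Hc x‖ ^ b * ‖g x‖ :=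
            intervalIntegral.integral_of_le zero_le_one
        _ ≤ (∫ x in Set.Ioc (0:ℝ) 1, (‖Hc x‖ ^ b) ^ q) ^ (1/q) *
              (∫ x in Set.Ioc (0:ℝ) 1, ‖g x‖ ^ p) ^ (1/p) := hold
        _ = (N⁻¹ * S) ^ ((1:ℝ)/q) * (Ip p A N) ^ ((1:ℝ)/p) := by
            rw [← intervalIntegral.integral_of_le (f := fun x => (‖Hc x‖ ^ b) ^ q) zero_le_one,
              ← intervalIntegral.integral_of_le (f := fun x => ‖g x‖ ^ p) zero_le_one, hIpg]
            congr 2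
            rw [intervalIntegral.integral_congr (g := fun x => ‖Hc x‖ ^ (2:ℕ))
              (fun x _ => hbqx x), parseval]
        _ ≤ (N⁻¹ * S) ^ ((1:ℝ)/q) * (max C₀ 0 * N ^ (p - 1)) ^ ((1:ℝ)/p) := by
            refine mul_le_mul_of_nonneg_left
              (Real.rpow_le_rpow hIp0 hIple (by positivity))
              (Real.rpow_nonneg (by positivity) _)
        _ = C * (S ^ ((1:ℝ)/2)) ^ b := by
            rw [Real.mul_rpow (inv_nonneg.2 hN0.le) S0,
              Real.mul_rpow (le_max_right C₀ 0) (Real.rpow_nonneg hN0.le _),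
              Real.inv_rpow hN0.le, ← Real.rpow_mul hN0.le, h1q,
              ← Real.rpow_mul S0, h2q, hC]
            have hNq : (0:ℝ) < N ^ ((1:ℝ)/q) := Real.rpow_pos_of_pos hN0 _
            field_simp
  -- final chain
  calc ‖(N:ℂ)⁻¹ * ∑ n ∈ AN A N, f n‖
      = ‖∫ x in (0:ℝ)..1, Hc x * (starRingEnd ℂ) (g x)‖ := by rw [orth1]
    _ ≤ ∫ x in (0:ℝ)..1, ‖Hc x‖ * ‖g x‖ := by
        refine le_trans (intervalIntegral.norm_integral_le_integral_norm zero_le_one) ?_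
        refine le_of_eq (intervalIntegral.integral_congr fun x _ => ?_)
        rw [norm_mul, RCLike.norm_conj]
    _ ≤ ∫ x in (0:ℝ)..1, (M ^ a * ‖Hc x‖ ^ b) * ‖g x‖ := by
        refine intervalIntegral.integral_mono_on zero_le_one
          ((contHc.norm.mul contg.norm).intervalIntegrable 0 1)
          (((continuous_const.mul contHb).mul contg.norm).intervalIntegrable 0 1) ?_
        intro x hx
        refine mul_le_mul_of_nonneg_right ?_ (norm_nonneg _)
        calc ‖Hc x‖ = ‖Hc x‖ ^ (a + b) := by rw [hab, Real.rpow_one]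
          _ = ‖Hc x‖ ^ a * ‖Hc x‖ ^ b := by
              refine Real.rpow_add' (norm_nonneg _) ?_
              rw [hab]; exact one_ne_zero
          _ ≤ M ^ a * ‖Hc x‖ ^ b := by
              refine mul_le_mul_of_nonneg_right ?_ (Real.rpow_nonneg (norm_nonneg _) _)
              exact Real.rpow_le_rpow (norm_nonneg _) (hMx x hx) ha0
    _ = M ^ a * ∫ x in (0:ℝ)..1, ‖Hc x‖ ^ b * ‖g x‖ := by
        simp_rw [mul_assoc]
        exact intervalIntegral.integral_const_mul _ _
    _ ≤ M ^ a * (C * (S ^ ((1:ℝ)/2)) ^ b) := by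
        refine mul_le_mul_of_nonneg_left key (Real.rpow_nonneg hM0 _)
    _ = C * M ^ a * (S ^ ((1:ℝ)/2)) ^ b := by ring
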